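/- Let X be a locally complete ordered set with a bottom element and f : (A, α) → (B, β) a morphism in Ord//X. If f : A → B is an effective descent morphism in Ord and, for every x ∈ X, the restriction f_x : A_x → B_x of f (where A_x = {a ∈ A : x ≤ α(a)} and B_x = {b ∈ B : x ≤ β(b)}) is a descent morphism in Ord, then f is an effective descent morphism in Ord//X. -/

import Mathlib

open CategoryTheory Limits

universe u
universe u₁ v₁ u₂ v₂

attribute [local instance] CategoryTheory.ConcreteCategory.instFunLike

namespace Desc

/-! ### Order-theoretic notions for preorders ("ordered sets") -/

/-- `x ≅ y`: equivalence in a preorder. -/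
def EquivLE {X : Type u} [Preorder X] (x y : X) : Prop := x ≤ y ∧ y ≤ x

/-- `m` is a binary meet (greatest lower bound) of `y` and `z`. -/
def IsMeet {X : Type u} [Preorder X] (y z m : X) : Prop :=
  m ≤ y ∧ m ≤ z ∧ ∀ u, u ≤ y → u ≤ z → u ≤ m

/-- `j` is a join (least upper bound) of the subset `S` computed in the down-set `↓x`. -/
def IsLocalJoin {X : Type u} [Preorder X] (x : X) (S : Set X) (j : X) : Prop :=
  j ≤ x ∧ (∀ s ∈ S, s ≤ j) ∧ ∀ u, u ≤ x → (∀ s ∈ S, s ≤ u) → j ≤ u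

/-- `X` is locally complete: every subset of a down-set `↓x` has a join in `↓x`. -/
def LocallyComplete (X : Type u) [Preorder X] : Prop :=
  ∀ x : X, ∀ S : Set X, (∀ s ∈ S, s ≤ x) → ∃ j, IsLocalJoin x S j

/-- `X` is complete: every subset has a join (least upper bound). -/
def CompleteOrd (X : Type u) [Preorder X] : Prop :=
  ∀ S : Set X, ∃ j, IsLUB S j

/-- `X` locally has binary meets: each down-set `↓x` has binary meets
(these are automatically meets in `X` of the pair). -/
def LocallyBinaryMeets (X : Type u) [Preorder X] : Prop :=
  ∀ x y z : X, y ≤ x → z ≤ x → ∃ m, IsMeet y z m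

/-- `X` is locally cartesian closed: each down-set `↓x` has binary meets and
exponentials `z^y` satisfying `w ∧ y ≤ z ↔ w ≤ z^y`. -/
def LocallyCartesianClosed (X : Type u) [Preorder X] : Prop :=
  LocallyBinaryMeets X ∧
    ∀ x y z : X, y ≤ x → z ≤ x →
      ∃ e, e ≤ x ∧ ∀ w, w ≤ x → ((∃ m, IsMeet w y m ∧ m ≤ z) ↔ w ≤ e)

theorem LocallyComplete.meets {X : Type u} [Preorder X] (h : LocallyComplete X) :
    LocallyBinaryMeets X := by
  intro x y z hy hz
  obtain ⟨j, hj⟩ := h x {u | u ≤ y ∧ u ≤ z} (fun s hs => hs.1.trans hy)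
  exact ⟨j, hj.2.2 y hy (fun s hs => hs.1), hj.2.2 z hz (fun s hs => hs.2),
    fun u h1 h2 => hj.2.1 u ⟨h1, h2⟩⟩

theorem CompleteOrd.meets {X : Type u} [Preorder X] (h : CompleteOrd X) :
    LocallyBinaryMeets X := by
  intro _ y z _ _
  obtain ⟨j, hj⟩ := h {u | u ≤ y ∧ u ≤ z}
  exact ⟨j, hj.2 (fun u hu => hu.1), hj.2 (fun u hu => hu.2),
    fun u h1 h2 => hj.1 ⟨h1, h2⟩⟩

/-! ### Descent-theoretic notions -/

/-- A morphism `f : A ⟶ B` in a category with pullbacks is an *effective descent morphism*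
if the comparison functor from `𝒜/B` to the Eilenberg–Moore category of the monad induced on
`𝒜/A` by the adjunction `f_! ⊣ f*` is an equivalence, i.e. `f*` is monadic. -/
def IsEffectiveDescentMorphism {C : Type*} [Category C] [HasPullbacks C]
    {A B : C} (f : A ⟶ B) : Prop :=
  (Monad.comparison (Over.mapPullbackAdj f)).IsEquivalence

/-- A morphism `f : A ⟶ B` in a category with pullbacks is a *descent morphism*
if the comparison functor from `𝒜/B` to the Eilenberg–Moore category of the monad induced on
`𝒜/A` by the adjunction `f_! ⊣ f*` is fully faithful. -/
def IsDescentMorphism {C : Type*} [Category C] [HasPullbacks C]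
    {A B : C} (f : A ⟶ B) : Prop :=
  (Monad.comparison (Over.mapPullbackAdj f)).Full ∧
    (Monad.comparison (Over.mapPullbackAdj f)).Faithful

/-- A morphism `f : A ⟶ B` is a (pullback-)stable regular epimorphism if every pullback of it
(along any `g : Z ⟶ B`) is a regular epimorphism. -/
def IsStableRegularEpi {C : Type*} [Category C] [HasPullbacks C]
    {A B : C} (f : A ⟶ B) : Prop :=
  ∀ ⦃Z : C⦄ (g : Z ⟶ B), Nonempty (RegularEpi (pullback.snd f g))



section PreordPullbacks

instance : HasPullbacks Preord.{u} := by
  have key : ∀ {A B C : Preord.{u}} (f : A ⟶ C) (g : B ⟶ C), HasLimit (cospan f g) := by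
    intro A B C f g
    let P : Preord.{u} := Preord.of {p : A × B // f p.1 = g p.2}
    let fst : P ⟶ A := Preord.ofHom ⟨fun p => p.1.1, fun _ _ h => h.1⟩
    let snd : P ⟶ B := Preord.ofHom ⟨fun p => p.1.2, fun _ _ h => h.2⟩
    have eq : fst ≫ f = snd ≫ g := Preord.ext (fun p => p.2)
    refine HasLimit.mk ⟨_, PullbackCone.IsLimit.mk eq
      (fun s => Preord.ofHom ⟨fun d => ⟨(s.fst d, s.snd d),
        ConcreteCategory.congr_hom s.condition d⟩,
        fun _ _ h => ⟨s.fst.hom.monotone h, s.snd.hom.monotone h⟩⟩)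
      (fun s => rfl) (fun s => rfl) (fun s m h1 h2 => ?_)⟩
    apply Preord.ext
    intro d
    apply Subtype.ext
    exact Prod.ext (ConcreteCategory.congr_hom h1 d)
      (ConcreteCategory.congr_hom h2 d)
  exact @hasPullbacks_of_hasLimit_cospan _ _ (fun {A B C f g} => key f g)

instance : HasPullbacks PartOrd.{u} := by
  have key : ∀ {A B C : PartOrd.{u}} (f : A ⟶ C) (g : B ⟶ C), HasLimit (cospan f g) := by
    intro A B C f g
    let P : PartOrd.{u} := PartOrd.of {p : A × B // f p.1 = g p.2}
    let fst : P ⟶ A := PartOrd.ofHom ⟨fun p => p.1.1, fun _ _ h => h.1⟩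
    let snd : P ⟶ B := PartOrd.ofHom ⟨fun p => p.1.2, fun _ _ h => h.2⟩
    have eq : fst ≫ f = snd ≫ g := PartOrd.ext (fun p => p.2)
    refine HasLimit.mk ⟨_, PullbackCone.IsLimit.mk eq
      (fun s => PartOrd.ofHom ⟨fun d => ⟨(s.fst d, s.snd d),
        ConcreteCategory.congr_hom s.condition d⟩,
        fun _ _ h => ⟨s.fst.hom.monotone h, s.snd.hom.monotone h⟩⟩)
      (fun s => rfl) (fun s => rfl) (fun s m h1 h2 => ?_)⟩
    apply PartOrd.ext
    intro d
    apply Subtype.ext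
    exact Prod.ext (ConcreteCategory.congr_hom h1 d)
      (ConcreteCategory.congr_hom h2 d)
  exact @hasPullbacks_of_hasLimit_cospan _ _ (fun {A B C f g} => key f g)

end PreordPullbacks



variable (X : Type u) [Preorder X]

/-! ### The lax comma category `Ord // X` -/

/-- Objects of the lax comma category `Ord // X`: an ordered set `A` together with a
monotone map `α : A → X`. -/
structure OrdComma : Type (u + 1) where
  carrier : Type u
  [str : Preorder carrier]
  map : carrier → X
  mono : Monotone map

attribute [instance] OrdComma.str

variable {X}

/-- Morphisms in `Ord // X`: monotone maps `f` with `α(a) ≤ β(f(a))`. -/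
@[ext]
structure OrdCommaHom (A B : OrdComma X) : Type u where
  toFun : A.carrier → B.carrier
  mono : Monotone toFun
  le : ∀ a, A.map a ≤ B.map (toFun a)

instance : Category (OrdComma X) where
  Hom := OrdCommaHom
  id A := ⟨id, monotone_id, fun _ => le_refl _⟩
  comp f g := ⟨OrdCommaHom.toFun g ∘ OrdCommaHom.toFun f,
    (OrdCommaHom.mono g).comp (OrdCommaHom.mono f),
    fun a => (OrdCommaHom.le f a).trans (OrdCommaHom.le g _)⟩
  id_comp _ := rfl
  comp_id _ := rfl
  assoc _ _ _ := rfl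

/-- The underlying function of a morphism in `Ord // X`. -/
def OrdComma.app {A B : OrdComma X} (f : A ⟶ B) : A.carrier → B.carrier :=
  OrdCommaHom.toFun f

/-! ### The category `Fam(X)` of set-indexed families of elements of `X` -/

variable (X) in
/-- Objects of `Fam(X)`: families `(α_j)_{j ∈ J}` of elements of `X`. -/
structure FamCat : Type (u + 1) where
  idx : Type u
  val : idx → X

/-- Morphisms in `Fam(X)`: functions `f : J → K` with `α_j ≤ β_{f(j)}`. -/
@[ext]
structure FamHom (A B : FamCat X) : Type u where
  toFun : A.idx → B.idx
  le : ∀ j, A.val j ≤ B.val (toFun j)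

instance : Category (FamCat X) where
  Hom := FamHom
  id A := ⟨id, fun _ => le_refl _⟩
  comp f g := ⟨FamHom.toFun g ∘ FamHom.toFun f,
    fun a => (FamHom.le f a).trans (FamHom.le g _)⟩
  id_comp _ := rfl
  comp_id _ := rfl
  assoc _ _ _ := rfl

/-- The underlying function of a morphism in `Fam(X)`. -/
def FamCat.app {A B : FamCat X} (f : A ⟶ B) : A.idx → B.idx :=
  FamHom.toFun f

/-! ### The category `Ord ×_Set Fam(X)` -/

variable (X) in
/-- Objects of `Ord ×_Set Fam(X)`: an ordered set `C` with an arbitrary function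
`χ : C → X`. -/
structure OrdFam : Type (u + 1) where
  carrier : Type u
  [str : Preorder carrier]
  map : carrier → X

attribute [instance] OrdFam.str

/-- Morphisms in `Ord ×_Set Fam(X)`: monotone maps `f` with `χ(c) ≤ ψ(f(c))`. -/
@[ext]
structure OrdFamHom (A B : OrdFam X) : Type u where
  toFun : A.carrier → B.carrier
  mono : Monotone toFun
  le : ∀ a, A.map a ≤ B.map (toFun a)

instance : Category (OrdFam X) where
  Hom := OrdFamHom
  id A := ⟨id, monotone_id, fun _ => le_refl _⟩
  comp f g := ⟨OrdFamHom.toFun g ∘ OrdFamHom.toFun f,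
    (OrdFamHom.mono g).comp (OrdFamHom.mono f),
    fun a => (OrdFamHom.le f a).trans (OrdFamHom.le g _)⟩
  id_comp _ := rfl
  comp_id _ := rfl
  assoc _ _ _ := rfl

/-! ### Functors between these categories -/

variable (X) in
/-- The forgetful functor `Ord // X ⥤ Ord`. -/
def ordCommaForget : OrdComma X ⥤ Preord.{u} where
  obj A := Preord.of A.carrier
  map f := Preord.ofHom ⟨OrdCommaHom.toFun f, OrdCommaHom.mono f⟩
  map_id _ := rfl
  map_comp _ _ := rfl

variable (X) in
/-- The forgetful functor `Ord // X ⥤ Fam(X)`, `(A, α) ↦ (α(a))_{a ∈ A}`. -/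
def ordCommaToFam : OrdComma X ⥤ FamCat X where
  obj A := ⟨A.carrier, A.map⟩
  map f := ⟨OrdCommaHom.toFun f, OrdCommaHom.le f⟩
  map_id _ := rfl
  map_comp _ _ := rfl

variable (X) in
/-- The projection `ρ₁ : Ord ×_Set Fam(X) ⥤ Ord`. -/
def rho₁ : OrdFam X ⥤ Preord.{u} where
  obj A := Preord.of A.carrier
  map f := Preord.ofHom ⟨OrdFamHom.toFun f, OrdFamHom.mono f⟩
  map_id _ := rfl
  map_comp _ _ := rfl

variable (X) in
/-- The projection `ρ₂ : Ord ×_Set Fam(X) ⥤ Fam(X)`. -/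
def rho₂ : OrdFam X ⥤ FamCat X where
  obj A := ⟨A.carrier, A.map⟩
  map f := ⟨OrdFamHom.toFun f, OrdFamHom.le f⟩
  map_id _ := rfl
  map_comp _ _ := rfl

/-! ### Restrictions `f_x : A_x → B_x` -/

/-- For `(A, α)` in `Ord // X` and `x ∈ X`, the ordered set `A_x = {a ∈ A : x ≤ α(a)}`. -/
def OrdComma.fiber (A : OrdComma X) (x : X) : Preord.{u} :=
  Preord.of {a : A.carrier // x ≤ A.map a}

/-- The restriction `f_x : A_x → B_x` of a morphism `f : (A, α) ⟶ (B, β)` of `Ord // X`. -/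
def OrdComma.fiberMap {A B : OrdComma X} (f : A ⟶ B) (x : X) :
    A.fiber x ⟶ B.fiber x :=
  Preord.ofHom ⟨fun a => ⟨OrdCommaHom.toFun f a.1, a.2.trans (OrdCommaHom.le f a.1)⟩,
    fun _ _ h => OrdCommaHom.mono f h⟩



variable {X : Type u} [Preorder X]

theorem OrdComma.hasPullbacks (hm : LocallyBinaryMeets X) :
    HasPullbacks (OrdComma X) := by
  have key : ∀ {A B C : OrdComma X} (f : A ⟶ C) (g : B ⟶ C), HasLimit (cospan f g) := by
    intro A B C f g
    have hmeet : ∀ p : {p : A.carrier × B.carrier //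
        OrdCommaHom.toFun f p.1 = OrdCommaHom.toFun g p.2},
        ∃ m, IsMeet (A.map p.1.1) (B.map p.1.2) m := fun p =>
      hm (C.map (OrdCommaHom.toFun f p.1.1)) _ _ (OrdCommaHom.le f p.1.1)
        (by rw [p.2]; exact OrdCommaHom.le g p.1.2)
    choose μ hμ using hmeet
    let P : OrdComma X :=
      { carrier := {p : A.carrier × B.carrier //
          OrdCommaHom.toFun f p.1 = OrdCommaHom.toFun g p.2}
        map := μ
        mono := fun p q h => by
          have hpq : p.1 ≤ q.1 := h
          exact (hμ q).2.2 _ ((hμ p).1.trans (A.mono (Prod.le_def.mp hpq).1))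
            ((hμ p).2.1.trans (B.mono (Prod.le_def.mp hpq).2)) }
    let pfst : P ⟶ A := ⟨fun p => p.1.1, fun _ _ h => h.1, fun p => (hμ p).1⟩
    let psnd : P ⟶ B := ⟨fun p => p.1.2, fun _ _ h => h.2, fun p => (hμ p).2.1⟩
    have eq : pfst ≫ f = psnd ≫ g := OrdCommaHom.ext (funext fun p => p.2)
    refine HasLimit.mk ⟨_, PullbackCone.IsLimit.mk eq
      (fun s => ⟨fun d => ⟨(OrdCommaHom.toFun s.fst d, OrdCommaHom.toFun s.snd d),
          congrFun (congrArg OrdCommaHom.toFun s.condition) d⟩,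
        fun _ _ h => ⟨OrdCommaHom.mono s.fst h, OrdCommaHom.mono s.snd h⟩,
        fun d => (hμ _).2.2 _ (OrdCommaHom.le s.fst d) (OrdCommaHom.le s.snd d)⟩)
      (fun s => rfl) (fun s => rfl) (fun s m h1 h2 => ?_)⟩
    apply OrdCommaHom.ext
    funext d
    exact Subtype.ext (Prod.ext (congrFun (congrArg OrdCommaHom.toFun h1) d)
      (congrFun (congrArg OrdCommaHom.toFun h2) d))
  exact @hasPullbacks_of_hasLimit_cospan _ _ (fun {A B C f g} => key f g)

theorem FamCat.hasPullbacks (hm : LocallyBinaryMeets X) :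
    HasPullbacks (FamCat X) := by
  have key : ∀ {A B C : FamCat X} (f : A ⟶ C) (g : B ⟶ C), HasLimit (cospan f g) := by
    intro A B C f g
    have hmeet : ∀ p : {p : A.idx × B.idx // FamHom.toFun f p.1 = FamHom.toFun g p.2},
        ∃ m, IsMeet (A.val p.1.1) (B.val p.1.2) m := fun p =>
      hm (C.val (FamHom.toFun f p.1.1)) _ _ (FamHom.le f p.1.1)
        (by rw [p.2]; exact FamHom.le g p.1.2)
    choose μ hμ using hmeet
    let P : FamCat X :=
      { idx := {p : A.idx × B.idx // FamHom.toFun f p.1 = FamHom.toFun g p.2}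
        val := μ }
    let pfst : P ⟶ A := ⟨fun p => p.1.1, fun p => (hμ p).1⟩
    let psnd : P ⟶ B := ⟨fun p => p.1.2, fun p => (hμ p).2.1⟩
    have eq : pfst ≫ f = psnd ≫ g := FamHom.ext (funext fun p => p.2)
    refine HasLimit.mk ⟨_, PullbackCone.IsLimit.mk eq
      (fun s => ⟨fun d => ⟨(FamHom.toFun s.fst d, FamHom.toFun s.snd d),
          congrFun (congrArg FamHom.toFun s.condition) d⟩,
        fun d => (hμ _).2.2 _ (FamHom.le s.fst d) (FamHom.le s.snd d)⟩)
      (fun s => rfl) (fun s => rfl) (fun s m h1 h2 => ?_)⟩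
    apply FamHom.ext
    funext d
    exact Subtype.ext (Prod.ext (congrFun (congrArg FamHom.toFun h1) d)
      (congrFun (congrArg FamHom.toFun h2) d))
  exact @hasPullbacks_of_hasLimit_cospan _ _ (fun {A B C f g} => key f g)

theorem OrdFam.hasPullbacks (hm : LocallyBinaryMeets X) :
    HasPullbacks (OrdFam X) := by
  have key : ∀ {A B C : OrdFam X} (f : A ⟶ C) (g : B ⟶ C), HasLimit (cospan f g) := by
    intro A B C f g
    have hmeet : ∀ p : {p : A.carrier × B.carrier //
        OrdFamHom.toFun f p.1 = OrdFamHom.toFun g p.2},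
        ∃ m, IsMeet (A.map p.1.1) (B.map p.1.2) m := fun p =>
      hm (C.map (OrdFamHom.toFun f p.1.1)) _ _ (OrdFamHom.le f p.1.1)
        (by rw [p.2]; exact OrdFamHom.le g p.1.2)
    choose μ hμ using hmeet
    let P : OrdFam X :=
      { carrier := {p : A.carrier × B.carrier //
          OrdFamHom.toFun f p.1 = OrdFamHom.toFun g p.2}
        map := μ }
    let pfst : P ⟶ A := ⟨fun p => p.1.1, fun _ _ h => h.1, fun p => (hμ p).1⟩
    let psnd : P ⟶ B := ⟨fun p => p.1.2, fun _ _ h => h.2, fun p => (hμ p).2.1⟩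
    have eq : pfst ≫ f = psnd ≫ g := OrdFamHom.ext (funext fun p => p.2)
    refine HasLimit.mk ⟨_, PullbackCone.IsLimit.mk eq
      (fun s => ⟨fun d => ⟨(OrdFamHom.toFun s.fst d, OrdFamHom.toFun s.snd d),
          congrFun (congrArg OrdFamHom.toFun s.condition) d⟩,
        fun _ _ h => ⟨OrdFamHom.mono s.fst h, OrdFamHom.mono s.snd h⟩,
        fun d => (hμ _).2.2 _ (OrdFamHom.le s.fst d) (OrdFamHom.le s.snd d)⟩)
      (fun s => rfl) (fun s => rfl) (fun s m h1 h2 => ?_)⟩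
    apply OrdFamHom.ext
    funext d
    exact Subtype.ext (Prod.ext (congrFun (congrArg OrdFamHom.toFun h1) d)
      (congrFun (congrArg OrdFamHom.toFun h2) d))
  exact @hasPullbacks_of_hasLimit_cospan _ _ (fun {A B C f g} => key f g)



variable (X : Type u) [Preorder X]

/-- The set of connected components of an ordered set `X`: the quotient of `X` by the
equivalence relation generated by `≤` (zigzags). -/
def ConnComp : Type u := Quot (fun a b : X => a ≤ b)

/-- The connected component of `X` corresponding to `i`, as an ordered set. -/
def Component (i : ConnComp X) : Type u :=
  {x : X // Quot.mk (fun a b : X => a ≤ b) x = i}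

instance (i : ConnComp X) : Preorder (Component X i) :=
  Subtype.preorder _

/-- The comparison functor `Ord // X ⥤ ∏_{i ∈ I} Ord // X_i`, where `(X_i)_{i ∈ I}` are the
connected components of `X`: it sends `(A, α)` to the family of (co)restrictions
`(A_i, α_i : A_i → X_i)` with `A_i = α⁻¹(X_i)`. -/
def componentFunctor : OrdComma X ⥤ (∀ i : ConnComp X, OrdComma (Component X i)) where
  obj A := fun i =>
    { carrier := {a : A.carrier // Quot.mk (fun a b : X => a ≤ b) (A.map a) = i}
      map := fun a => ⟨A.map a.1, a.2⟩
      mono := fun _ _ h => A.mono h }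
  map {A B} f := fun i =>
    { toFun := fun a => ⟨OrdCommaHom.toFun f a.1,
        (Quot.sound (OrdCommaHom.le f a.1)).symm.trans a.2⟩
      mono := fun _ _ h => OrdCommaHom.mono f h
      le := fun a => OrdCommaHom.le f a.1 }
  map_id A := by
    funext i
    apply OrdCommaHom.ext
    funext a
    rfl
  map_comp f g := by
    funext i
    apply OrdCommaHom.ext
    funext a
    rfl

/-! Pullbacks along `f` in `Ord // X` are computed on the underlying ordered sets, with value
`γ c ∧ α a` at `(c, a)`. Being a descent morphism in `Ord`, `f` lifts comparable pairs
`b ≤ b'` to comparable pairs of `A`; this makes the comparison functor of `f` in `Ord // X`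
faithful and full. For essential surjectivity, an algebra `D → A` descends in `Ord` to some
`C → B` with `C ×_B A ≅ D`, and `C` gets the map `γ c := δ (c, a)` for a lift `a` of `c` with
`β (p c) ≤ α a`, which exists because `f_{β (p c)}` is surjective. The algebra action forces
`δ (c, a) = γ c ∧ α a` for every lift `a`, and `γ` is monotone because each `f_x` lifts
comparable pairs. -/

section SameLeftAdjoint

variable {C : Type*} [Category C] {D : Type*} [Category D]
variable {L : C ⥤ D} {R R' : D ⥤ C} (adj : L ⊣ R) (adj' : L ⊣ R')

def toMonadIsoOfSameLeft : adj.toMonad ≅ adj'.toMonad :=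
  MonadIso.mk (Functor.isoWhiskerLeft L (adj.rightAdjointUniq adj'))
    (fun X => adj.unit_rightAdjointUniq_hom_app adj' X)
    (fun X => by
      dsimp [Adjunction.toMonad]
      rw [Category.assoc]
      erw [← (adj.rightAdjointUniq adj').hom.naturality (adj'.counit.app (L.obj X)),
        ← Functor.map_comp_assoc, adj.rightAdjointUniq_hom_app_counit adj']
      rfl)

def comparisonIsoOfSameLeft :
    Monad.comparison adj ⋙ (Monad.algebraEquivOfIsoMonads (toMonadIsoOfSameLeft adj adj')).functor
      ≅ Monad.comparison adj' :=
  NatIso.ofComponents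
    (fun X => Monad.Algebra.isoMk ((adj.rightAdjointUniq adj').app X) (by
      dsimp [toMonadIsoOfSameLeft]
      erw [← R'.map_comp, adj.rightAdjointUniq_hom_app_counit adj', Category.assoc,
        (adj.rightAdjointUniq adj').hom.naturality (adj.counit.app X), ← Category.assoc,
        (adj.rightAdjointUniq adj').inv_hom_id_app (L.obj (R.obj X)), Category.id_comp]
      rfl))
    (fun u => Monad.Algebra.Hom.ext ((adj.rightAdjointUniq adj').hom.naturality u))

theorem isEquivalence_comparison_of_sameLeft [(Monad.comparison adj).IsEquivalence] :
    (Monad.comparison adj').IsEquivalence :=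
  Functor.isEquivalence_of_iso (comparisonIsoOfSameLeft adj adj')

theorem full_comparison_of_sameLeft [(Monad.comparison adj).Full] :
    (Monad.comparison adj').Full :=
  Functor.Full.of_iso (comparisonIsoOfSameLeft adj adj')

theorem faithful_comparison_of_sameLeft [(Monad.comparison adj).Faithful] :
    (Monad.comparison adj').Faithful :=
  Functor.Faithful.of_iso (comparisonIsoOfSameLeft adj adj')

end SameLeftAdjoint

section PreordPullback

theorem Preord.over_w_apply {Y : Preord.{u}} {c c' : Over Y} (u : c ⟶ c') (z : c.left) :
    c'.hom (u.left z) = c.hom z :=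
  ConcreteCategory.congr_hom (Over.w u) z

variable {A B : Preord.{u}} (f : A ⟶ B)

abbrev PreordPullbackCarrier (c : Over B) : Type u :=
  {p : c.left × A // c.hom p.1 = f p.2}

def preordPullback : Over B ⥤ Over A where
  obj c := Over.mk (Y := Preord.of (PreordPullbackCarrier f c))
    (Preord.ofHom ⟨fun p => p.1.2, fun _ _ h => h.2⟩)
  map {c c'} u := Over.homMk
    (Preord.ofHom ⟨fun p => ⟨(u.left p.1.1, p.1.2), (Preord.over_w_apply u _).trans p.2⟩,
      fun _ _ h => ⟨u.left.hom.monotone h.1, h.2⟩⟩)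
    rfl

def preordPullbackAdj : Over.map f ⊣ preordPullback f :=
  Adjunction.mkOfHomEquiv
    { homEquiv := fun d c =>
        { toFun := fun v => Over.homMk
            (Preord.ofHom ⟨fun e => ⟨(v.left e, d.hom e), Preord.over_w_apply v e⟩,
              fun _ _ h => ⟨v.left.hom.monotone h, d.hom.hom.monotone h⟩⟩)
            rfl
          invFun := fun w => Over.homMk
            (Preord.ofHom ⟨fun e => (w.left e).1.1, fun _ _ h => (w.left.hom.monotone h).1⟩)
            (Preord.ext fun e => (w.left e).2.trans (congrArg f (Preord.over_w_apply w e)))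
          left_inv := fun _ => rfl
          right_inv := fun w => Over.OverMorphism.ext <| Preord.ext fun e =>
            Subtype.ext (Prod.ext rfl (Preord.over_w_apply w e).symm) } }

end PreordPullback

def LiftsComparablePairs {α β : Type*} [Preorder α] [Preorder β] (f : α → β) : Prop :=
  ∀ ⦃b b' : β⦄, b ≤ b' → ∃ a a', a ≤ a' ∧ f a = b ∧ f a' = b'

theorem LiftsComparablePairs.surjective {α β : Type*} [Preorder α] [Preorder β] {f : α → β}
    (hf : LiftsComparablePairs f) : Function.Surjective f := fun b =>
  let ⟨a, _, _, ha, _⟩ := hf (le_refl b)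
  ⟨a, ha⟩

section PreordDescent

variable {A B : Preord.{u}} (f : A ⟶ B)

theorem eq_of_le_sum_punit {x y : PUnit.{u + 1} ⊕ PUnit.{u + 1}} (h : x ≤ y) : x = y := by
  cases h <;> rfl

/-- The two objects `pt ↦ b` and `pt ⊔ pt ↦ b` of `Ord/B` have two morphisms between them,
which are identified by the pullback along `f` when `b` has no preimage. -/
theorem surjective_of_faithful_comparison
    [(Monad.comparison (preordPullbackAdj f)).Faithful] : Function.Surjective f := by
  intro b
  by_contra! hb
  let c : Over B := Over.mk (Y := Preord.of PUnit.{u + 1})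
    (Preord.ofHom ⟨fun _ => b, fun _ _ _ => le_rfl⟩)
  let c' : Over B := Over.mk (Y := Preord.of (PUnit.{u + 1} ⊕ PUnit.{u + 1}))
    (Preord.ofHom ⟨fun _ => b, fun _ _ _ => le_rfl⟩)
  let incl (s : PUnit.{u + 1} ⊕ PUnit.{u + 1}) : c ⟶ c' :=
    Over.homMk (Preord.ofHom ⟨fun _ => s, fun _ _ _ => le_rfl⟩) rfl
  have : (Monad.comparison (preordPullbackAdj f)).map (incl (.inl ⟨⟩)) =
      (Monad.comparison (preordPullbackAdj f)).map (incl (.inr ⟨⟩)) :=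
    Monad.Algebra.Hom.ext <| Over.OverMorphism.ext <| Preord.ext fun e => (hb e.1.2 e.2.symm).elim
  have := ConcreteCategory.congr_hom
    (congrArg CommaMorphism.left ((Monad.comparison _).map_injective this)) PUnit.unit
  exact Sum.inl_ne_inr this

/-- Pull back the chain `b ≤ b'` and its discrete version: without a lift of `b ≤ b'`, the
identity of the pullbacks is a morphism of algebras, but it cannot come from `Ord/B`. -/
theorem liftsComparablePairs_of_full_comparison [(Monad.comparison (preordPullbackAdj f)).Full]
    [(Monad.comparison (preordPullbackAdj f)).Faithful] : LiftsComparablePairs f := by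
  intro b b' hbb
  by_contra! hno
  let c : Over B := Over.mk (Y := Preord.of (PUnit.{u + 1} ⊕ₗ PUnit.{u + 1}))
    (Preord.ofHom ⟨fun s => Sum.elim (fun _ => b) (fun _ => b') (ofLex s), by
      rintro (_ | _) (_ | _) h
      exacts [le_rfl, hbb, absurd h Sum.Lex.not_inr_le_inl, le_rfl]⟩)
  let c' : Over B := Over.mk (Y := Preord.of (PUnit.{u + 1} ⊕ PUnit.{u + 1}))
    (Preord.ofHom ⟨Sum.elim (fun _ => b) (fun _ => b'), fun _ _ h => by
      rw [eq_of_le_sum_punit h]⟩)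
  let forgetChain : (preordPullback f).obj c ⟶ (preordPullback f).obj c' :=
    Over.homMk (Preord.ofHom ⟨fun e => ⟨(ofLex e.1.1, e.1.2), e.2⟩, by
      rintro ⟨⟨s, a⟩, hs⟩ ⟨⟨s', a'⟩, hs'⟩ ⟨hss, haa⟩
      refine ⟨?_, haa⟩
      cases s <;> cases s'
      · exact Sum.LiftRel.inl le_rfl
      · exact (hno a a' haa hs.symm hs'.symm).elim
      · exact absurd hss Sum.Lex.not_inr_le_inl
      · exact Sum.LiftRel.inr le_rfl⟩) rfl
  obtain ⟨h, -⟩ := (Monad.comparison (preordPullbackAdj f)).map_surjective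
    (⟨forgetChain, rfl⟩ :
      (Monad.comparison (preordPullbackAdj f)).obj c ⟶ (Monad.comparison _).obj c')
  have hconst := eq_of_le_sum_punit (h.left.hom.monotone (Sum.Lex.inl_le_inr ⟨⟩ ⟨⟩))
  have hbb' : b = b' := (Preord.over_w_apply h (toLex (.inl ⟨⟩))).symm.trans
    ((congrArg c'.hom hconst).trans (Preord.over_w_apply h (toLex (.inr ⟨⟩))))
  obtain ⟨a, ha⟩ := surjective_of_faithful_comparison f b
  exact hno a a le_rfl ha (ha.trans hbb')

end PreordDescent

section OrdCommaPullback

variable {X : Type u} [Preorder X]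

instance {A B : OrdComma X} : CoeFun (A ⟶ B) (fun _ => A.carrier → B.carrier) :=
  ⟨OrdCommaHom.toFun⟩

theorem OrdComma.over_w_apply {Y : OrdComma X} {c c' : Over Y} (u : c ⟶ c')
    (z : c.left.carrier) : c'.hom (u.left z) = c.hom z :=
  congrFun (congrArg OrdCommaHom.toFun (Over.w u)) z

variable {A B : OrdComma X} (f : A ⟶ B)

def PullbackCarrier (c : Over B) : Type u :=
  {p : c.left.carrier × A.carrier // c.hom p.1 = f p.2}

instance (c : Over B) : Preorder (PullbackCarrier f c) :=
  Subtype.preorder _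

variable {f} in
theorem PullbackCarrier.le_iff {c : Over B} {p q : PullbackCarrier f c} :
    p ≤ q ↔ p.1.1 ≤ q.1.1 ∧ p.1.2 ≤ q.1.2 :=
  Iff.rfl

variable (hm : LocallyBinaryMeets X)

noncomputable def pullbackMap (c : Over B) (p : PullbackCarrier f c) : X :=
  (hm (B.map (f p.1.2)) (c.left.map p.1.1) (A.map p.1.2)
    (p.2 ▸ OrdCommaHom.le c.hom p.1.1) (OrdCommaHom.le f p.1.2)).choose

theorem isMeet_pullbackMap (c : Over B) (p : PullbackCarrier f c) :
    IsMeet (c.left.map p.1.1) (A.map p.1.2) (pullbackMap f hm c p) :=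
  (hm (B.map (f p.1.2)) (c.left.map p.1.1) (A.map p.1.2)
    (p.2 ▸ OrdCommaHom.le c.hom p.1.1) (OrdCommaHom.le f p.1.2)).choose_spec

noncomputable def pullbackObj (c : Over B) : OrdComma X where
  carrier := PullbackCarrier f c
  map := pullbackMap f hm c
  mono p q hpq := (isMeet_pullbackMap f hm c q).2.2 _
    ((isMeet_pullbackMap f hm c p).1.trans (c.left.mono (PullbackCarrier.le_iff.1 hpq).1))
    ((isMeet_pullbackMap f hm c p).2.1.trans (A.mono (PullbackCarrier.le_iff.1 hpq).2))

noncomputable def pullbackFunctor : Over B ⥤ Over A where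
  obj c := Over.mk (Y := pullbackObj f hm c)
    ⟨fun p => p.1.2, fun _ _ h => h.2, fun p => (isMeet_pullbackMap f hm c p).2.1⟩
  map {c c'} u := Over.homMk
    ⟨fun p => ⟨(u.left p.1.1, p.1.2), (OrdComma.over_w_apply u _).trans p.2⟩,
      fun _ _ h => ⟨OrdCommaHom.mono u.left h.1, h.2⟩,
      fun p => (isMeet_pullbackMap f hm c' _).2.2 _
        ((isMeet_pullbackMap f hm c p).1.trans (OrdCommaHom.le u.left p.1.1))
        (isMeet_pullbackMap f hm c p).2.1⟩
    rfl

noncomputable def pullbackAdj : Over.map f ⊣ pullbackFunctor f hm :=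
  Adjunction.mkOfHomEquiv
    { homEquiv := fun d c =>
        { toFun := fun v => Over.homMk
            ⟨fun e => ⟨(v.left e, d.hom e), OrdComma.over_w_apply v e⟩,
              fun _ _ h => ⟨OrdCommaHom.mono v.left h, OrdCommaHom.mono d.hom h⟩,
              fun e => (isMeet_pullbackMap f hm c _).2.2 _ (OrdCommaHom.le v.left e)
                (OrdCommaHom.le d.hom e)⟩
            rfl
          invFun := fun w => Over.homMk
            ⟨fun e => (w.left e : PullbackCarrier f c).1.1,
              fun _ _ h => (OrdCommaHom.mono w.left h).1,
              fun e => (OrdCommaHom.le w.left e).trans (isMeet_pullbackMap f hm c _).1⟩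
            (OrdCommaHom.ext <| funext fun e =>
              (w.left e : PullbackCarrier f c).2.trans (congrArg f (OrdComma.over_w_apply w e)))
          left_inv := fun _ => rfl
          right_inv := fun w => Over.OverMorphism.ext <| OrdCommaHom.ext <| funext fun e =>
            Subtype.ext (Prod.ext rfl (OrdComma.over_w_apply w e).symm) } }

end OrdCommaPullback

theorem IsEffectiveDescentMorphism.isDescentMorphism {C : Type*} [Category C] [HasPullbacks C]
    {A B : C} {f : A ⟶ B} (hf : IsEffectiveDescentMorphism f) : IsDescentMorphism f :=
  have : (Monad.comparison (Over.mapPullbackAdj f)).IsEquivalence := hf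
  ⟨inferInstance, inferInstance⟩

theorem IsDescentMorphism.liftsComparablePairs {A B : Preord.{u}} {f : A ⟶ B}
    (hf : IsDescentMorphism f) : LiftsComparablePairs f :=
  have := hf.1
  have := hf.2
  have := full_comparison_of_sameLeft (Over.mapPullbackAdj f) (preordPullbackAdj f)
  have := faithful_comparison_of_sameLeft (Over.mapPullbackAdj f) (preordPullbackAdj f)
  liftsComparablePairs_of_full_comparison f

section FiberLifts

variable {X : Type u} [Preorder X] {A B : OrdComma X} {f : A ⟶ B}

theorem exists_lift_above {x : X} (hfx : LiftsComparablePairs (OrdComma.fiberMap f x))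
    {b b' : B.carrier} (hb : x ≤ B.map b) (hb' : x ≤ B.map b') (hbb : b ≤ b') :
    ∃ a a', a ≤ a' ∧ f a = b ∧ f a' = b' ∧ x ≤ A.map a ∧ x ≤ A.map a' := by
  obtain ⟨a, a', haa, ha, ha'⟩ := hfx (b := ⟨b, hb⟩) (b' := ⟨b', hb'⟩) hbb
  exact ⟨a.1, a'.1, haa, congrArg Subtype.val ha, congrArg Subtype.val ha', a.2, a'.2⟩

theorem exists_tight_lift (hfx : ∀ x, LiftsComparablePairs (OrdComma.fiberMap f x))
    (b : B.carrier) : ∃ a, f a = b ∧ B.map b ≤ A.map a :=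
  let ⟨a, _, _, ha, _, hba, _⟩ := exists_lift_above (hfx _) le_rfl le_rfl (le_refl b)
  ⟨a, ha, hba⟩

end FiberLifts

section Comparison

variable {X : Type u} [Preorder X] (hm : LocallyBinaryMeets X) {A B : OrdComma X} {f : A ⟶ B}

theorem faithful_pullbackFunctor (hf : Function.Surjective f) :
    (pullbackFunctor f hm).Faithful where
  map_injective {c c'} u v huv := Over.OverMorphism.ext <| OrdCommaHom.ext <| funext fun z => by
    obtain ⟨a, ha⟩ := hf (c.hom z)
    exact congrArg (fun p : PullbackCarrier f c' => p.1.1)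
      (congrFun (congrArg (fun w => OrdCommaHom.toFun (CommaMorphism.left w)) huv)
        (⟨(z, a), ha.symm⟩ : PullbackCarrier f c))

theorem faithful_comparison_pullbackAdj (hf : Function.Surjective f) :
    (Monad.comparison (pullbackAdj f hm)).Faithful :=
  have := faithful_pullbackFunctor hm hf
  Functor.Faithful.of_comp_iso (Monad.comparisonForget (pullbackAdj f hm))

variable {c c' : Over B}
  (m : (Monad.comparison (pullbackAdj f hm)).obj c ⟶ (Monad.comparison (pullbackAdj f hm)).obj c')

theorem comparison_hom_snd (e : PullbackCarrier f c) :
    (m.f.left e : PullbackCarrier f c').1.2 = e.1.2 :=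
  OrdComma.over_w_apply m.f e

/-- The action on the pullback of `c` is `((z, a), a') ↦ (z, a')`, and `m` commutes with it. -/
theorem comparison_hom_fst (e : PullbackCarrier f c) (a : A.carrier) (h : f e.1.2 = f a) :
    (m.f.left ⟨(e.1.1, a), e.2.trans h⟩ : PullbackCarrier f c').1.1 =
      (m.f.left e : PullbackCarrier f c').1.1 := by
  have := congrFun (congrArg (fun w => OrdCommaHom.toFun (CommaMorphism.left w)) m.h)
    (⟨(e, a), h⟩ : PullbackCarrier f ((Over.map f).obj ((pullbackFunctor f hm).obj c)))
  exact (congrArg (fun p : PullbackCarrier f c' => p.1.1) this).symm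

theorem full_comparison_pullbackAdj (hf : LiftsComparablePairs f)
    (hfx : ∀ x, LiftsComparablePairs (OrdComma.fiberMap f x)) :
    (Monad.comparison (pullbackAdj f hm)).Full where
  map_surjective {c c'} m := by
    choose lift hlift hlift_le using fun z : c.left.carrier => exists_tight_lift hfx (c.hom z)
    let lift' (z : c.left.carrier) : PullbackCarrier f c := ⟨(z, lift z), (hlift z).symm⟩
    let g (z : c.left.carrier) : c'.left.carrier := (m.f.left (lift' z) : PullbackCarrier f c').1.1
    have hg (e : PullbackCarrier f c) : g e.1.1 = (m.f.left e : PullbackCarrier f c').1.1 :=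
      comparison_hom_fst hm m e (lift e.1.1) (e.2.symm.trans (hlift e.1.1).symm)
    have g_mono : Monotone g := fun z z' hzz => by
      obtain ⟨a, a', haa, ha, ha'⟩ := hf (OrdCommaHom.mono c.hom hzz)
      rw [hg ⟨(z, a), ha.symm⟩, hg ⟨(z', a'), ha'.symm⟩]
      exact (PullbackCarrier.le_iff.1 (OrdCommaHom.mono m.f.left (PullbackCarrier.le_iff.2
        (show z ≤ z' ∧ a ≤ a' from ⟨hzz, haa⟩)))).1
    have g_le (z : c.left.carrier) : c.left.map z ≤ c'.left.map (g z) :=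
      calc c.left.map z ≤ pullbackMap f hm c (lift' z) :=
            (isMeet_pullbackMap f hm c _).2.2 _ le_rfl ((OrdCommaHom.le c.hom z).trans (hlift_le z))
        _ ≤ pullbackMap f hm c' (m.f.left (lift' z)) := OrdCommaHom.le m.f.left _
        _ ≤ c'.left.map (g z) := (isMeet_pullbackMap f hm c' _).1
    have g_over (z : c.left.carrier) : c'.hom (g z) = c.hom z :=
      (m.f.left (lift' z) : PullbackCarrier f c').2.trans
        ((congrArg f (comparison_hom_snd hm m (lift' z))).trans (hlift z))
    refine ⟨Over.homMk ⟨g, g_mono, g_le⟩ (OrdCommaHom.ext (funext g_over)), ?_⟩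
    exact Monad.Algebra.Hom.ext <| Over.OverMorphism.ext <| OrdCommaHom.ext <| funext fun e =>
      Subtype.ext (Prod.ext (hg e) (comparison_hom_snd hm m e).symm)

end Comparison

section Algebra

variable {X : Type u} [Preorder X] (hm : LocallyBinaryMeets X) {A B : OrdComma X} {f : A ⟶ B}
  (alg : (pullbackAdj f hm).toMonad.Algebra)

noncomputable def algebraAct (d : alg.A.left.carrier) (a : A.carrier) (h : f (alg.A.hom d) = f a) :
    alg.A.left.carrier :=
  alg.a.left (⟨(d, a), h⟩ : PullbackCarrier f ((Over.map f).obj alg.A))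

theorem hom_algebraAct (d : alg.A.left.carrier) (a : A.carrier) (h : f (alg.A.hom d) = f a) :
    alg.A.hom (algebraAct hm alg d a h) = a :=
  OrdComma.over_w_apply alg.a _

theorem algebraAct_self (d : alg.A.left.carrier) : algebraAct hm alg d (alg.A.hom d) rfl = d :=
  congrFun (congrArg (fun t => OrdCommaHom.toFun (CommaMorphism.left t)) alg.unit) d

theorem algebraAct_algebraAct (d : alg.A.left.carrier) (a₁ a₂ : A.carrier)
    (h₁ : f (alg.A.hom d) = f a₁) (h₂ : f a₁ = f a₂) :
    algebraAct hm alg (algebraAct hm alg d a₁ h₁) a₂ (by rw [hom_algebraAct]; exact h₂) =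
      algebraAct hm alg d a₂ (h₁.trans h₂) :=
  (congrFun (congrArg (fun t => OrdCommaHom.toFun (CommaMorphism.left t)) alg.assoc)
    (⟨(⟨(d, a₁), h₁⟩, a₂), h₂⟩ : PullbackCarrier f
      ((Over.map f).obj ((pullbackFunctor f hm).obj ((Over.map f).obj alg.A))))).symm

theorem le_map_algebraAct {d : alg.A.left.carrier} {a : A.carrier} (h : f (alg.A.hom d) = f a)
    {w : X} (hd : w ≤ alg.A.left.map d) (ha : w ≤ A.map a) :
    w ≤ alg.A.left.map (algebraAct hm alg d a h) :=
  ((isMeet_pullbackMap f hm _ _).2.2 w hd ha).trans (OrdCommaHom.le alg.a.left _)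

noncomputable def toPreordAlgebra :
    (preordPullbackAdj ((ordCommaForget X).map f)).toMonad.Algebra where
  A := Over.mk (Y := Preord.of alg.A.left.carrier)
    (Preord.ofHom ⟨alg.A.hom, OrdCommaHom.mono alg.A.hom⟩)
  a := Over.homMk
    (Preord.ofHom ⟨fun e => algebraAct hm alg e.1.1 e.1.2 e.2,
      fun _ _ h => OrdCommaHom.mono alg.a.left h⟩)
    (Preord.ext fun e => hom_algebraAct hm alg e.1.1 e.1.2 e.2)
  unit := Over.OverMorphism.ext <| Preord.ext fun d => algebraAct_self hm alg d
  assoc := Over.OverMorphism.ext <| Preord.ext fun z =>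
    (algebraAct_algebraAct hm alg z.1.1.1.1 z.1.1.1.2 z.1.2 z.1.1.2 z.2).symm

end Algebra

section Gluing

variable {X : Type u} [Preorder X] (hm : LocallyBinaryMeets X) {A B : OrdComma X} {f : A ⟶ B}
  (alg : (pullbackAdj f hm).toMonad.Algebra) {C : Over ((ordCommaForget X).obj B)}
  (Φ : (Monad.comparison (preordPullbackAdj ((ordCommaForget X).map f))).obj C ≅
    toPreordAlgebra hm alg)

theorem hom_iso_hom (e : PreordPullbackCarrier ((ordCommaForget X).map f) C) :
    alg.A.hom (Φ.hom.f.left e) = e.1.2 :=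
  Preord.over_w_apply Φ.hom.f e

theorem algebraAct_iso_hom (e : PreordPullbackCarrier ((ordCommaForget X).map f) C) (a : A.carrier)
    (h : f e.1.2 = f a) :
    algebraAct hm alg (Φ.hom.f.left e) a (by rw [hom_iso_hom]; exact h) =
      Φ.hom.f.left ⟨(e.1.1, a), e.2.trans h⟩ :=
  ConcreteCategory.congr_hom (congrArg CommaMorphism.left Φ.hom.h) ⟨(e, a), h⟩

variable (hfx : ∀ x, LiftsComparablePairs (OrdComma.fiberMap f x))

theorem map_iso_hom_le (e : PreordPullbackCarrier ((ordCommaForget X).map f) C) :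
    alg.A.left.map (Φ.hom.f.left e) ≤ B.map (C.hom e.1.1) := by
  have := OrdCommaHom.le alg.A.hom (Φ.hom.f.left e)
  rw [hom_iso_hom] at this
  exact this.trans ((congrArg B.map e.2).symm ▸ OrdCommaHom.le f e.1.2)

noncomputable def gluedMap (c : C.left) : X :=
  alg.A.left.map (Φ.hom.f.left ⟨(c, (exists_tight_lift hfx (C.hom c)).choose),
    (exists_tight_lift hfx (C.hom c)).choose_spec.1.symm⟩)

theorem exists_gluedMap_eq (c : C.left) :
    ∃ (a : A.carrier) (h : C.hom c = f a), gluedMap hm alg Φ hfx c =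
      alg.A.left.map (Φ.hom.f.left ⟨(c, a), h⟩) ∧ B.map (C.hom c) ≤ A.map a :=
  ⟨_, _, rfl, (exists_tight_lift hfx (C.hom c)).choose_spec.2⟩

/-- `Φ (c, a)` and `Φ (c, a₀)`, for the lift `a₀` defining `gluedMap c`, are obtained from
each other by the action, whose values are bounded below by meets. -/
theorem isMeet_map_iso_hom (e : PreordPullbackCarrier ((ordCommaForget X).map f) C) :
    IsMeet (gluedMap hm alg Φ hfx e.1.1) (A.map e.1.2) (alg.A.left.map (Φ.hom.f.left e)) := by
  obtain ⟨a, ha, hglued, hβa⟩ := exists_gluedMap_eq hm alg Φ hfx e.1.1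
  have hα : alg.A.left.map (Φ.hom.f.left e) ≤ A.map e.1.2 :=
    hom_iso_hom hm alg Φ e ▸ OrdCommaHom.le alg.A.hom (Φ.hom.f.left e)
  refine ⟨?_, hα, fun w hwglued hwα => ?_⟩
  · rw [hglued, ← algebraAct_iso_hom hm alg Φ e a (e.2.symm.trans ha)]
    exact le_map_algebraAct hm alg _ le_rfl ((map_iso_hom_le hm alg Φ e).trans hβa)
  · rw [hglued] at hwglued
    exact (le_map_algebraAct hm alg _ hwglued hwα).trans_eq (congrArg alg.A.left.map
      (algebraAct_iso_hom hm alg Φ ⟨(e.1.1, a), ha⟩ e.1.2 (ha.symm.trans e.2)))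

theorem gluedMap_le_map (c : C.left) : gluedMap hm alg Φ hfx c ≤ B.map (C.hom c) := by
  obtain ⟨a, ha, hglued, -⟩ := exists_gluedMap_eq hm alg Φ hfx c
  exact hglued ▸ map_iso_hom_le hm alg Φ ⟨(c, a), ha⟩

theorem gluedMap_monotone : Monotone (gluedMap hm alg Φ hfx) := fun c c' hcc => by
  have hC : C.hom c ≤ C.hom c' := C.hom.hom.monotone hcc
  obtain ⟨a, a', haa, ha, ha', hxa, -⟩ := exists_lift_above (hfx (gluedMap hm alg Φ hfx c))
    (gluedMap_le_map hm alg Φ hfx c) ((gluedMap_le_map hm alg Φ hfx c).trans (B.mono hC)) hC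
  let e : PreordPullbackCarrier ((ordCommaForget X).map f) C := ⟨(c, a), ha.symm⟩
  let e' : PreordPullbackCarrier ((ordCommaForget X).map f) C := ⟨(c', a'), ha'.symm⟩
  calc gluedMap hm alg Φ hfx c ≤ alg.A.left.map (Φ.hom.f.left e) :=
        (isMeet_map_iso_hom hm alg Φ hfx e).2.2 _ le_rfl hxa
    _ ≤ alg.A.left.map (Φ.hom.f.left e') :=
        alg.A.left.mono (Φ.hom.f.left.hom.monotone (show e.1 ≤ e'.1 from ⟨hcc, haa⟩))
    _ ≤ gluedMap hm alg Φ hfx c' := (isMeet_map_iso_hom hm alg Φ hfx e').1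

noncomputable def gluedOver : Over B :=
  Over.mk (Y := { carrier := C.left, map := gluedMap hm alg Φ hfx,
                  mono := gluedMap_monotone hm alg Φ hfx })
    ⟨C.hom, C.hom.hom.monotone, gluedMap_le_map hm alg Φ hfx⟩

theorem iso_inv_hom_apply (d : alg.A.left.carrier) : Φ.hom.f.left (Φ.inv.f.left d) = d := by
  have := congrArg (fun φ => φ.f.left) Φ.inv_hom_id
  exact ConcreteCategory.congr_hom this d

theorem iso_hom_inv_apply (e : PreordPullbackCarrier ((ordCommaForget X).map f) C) :
    Φ.inv.f.left (Φ.hom.f.left e) = e := by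
  have := congrArg (fun φ => φ.f.left) Φ.hom_inv_id
  exact ConcreteCategory.congr_hom this e

noncomputable def gluedIso :
    (Monad.comparison (pullbackAdj f hm)).obj (gluedOver hm alg Φ hfx) ≅ alg :=
  Monad.Algebra.isoMk (Over.isoMk
    { hom := ⟨fun e => Φ.hom.f.left e, fun _ _ h => Φ.hom.f.left.hom.monotone h, fun e =>
        (isMeet_map_iso_hom hm alg Φ hfx e).2.2 _ (isMeet_pullbackMap f hm _ e).1
          (isMeet_pullbackMap f hm _ e).2.1⟩
      inv := ⟨fun d => Φ.inv.f.left d, fun _ _ h => Φ.inv.f.left.hom.monotone h, fun d => by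
        have := isMeet_map_iso_hom hm alg Φ hfx (Φ.inv.f.left d)
        rw [iso_inv_hom_apply] at this
        exact (isMeet_pullbackMap f hm _ _).2.2 _ this.1 this.2.1⟩
      hom_inv_id := OrdCommaHom.ext (funext (iso_hom_inv_apply hm alg Φ))
      inv_hom_id := OrdCommaHom.ext (funext (iso_inv_hom_apply hm alg Φ)) }
    (OrdCommaHom.ext (funext (hom_iso_hom hm alg Φ))))
    (Over.OverMorphism.ext <| OrdCommaHom.ext <| funext fun z =>
      algebraAct_iso_hom hm alg Φ z.1.1 z.1.2 z.2)

end Gluing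

theorem essSurj_comparison_pullbackAdj {X : Type u} [Preorder X] (hm : LocallyBinaryMeets X)
    {A B : OrdComma X} {f : A ⟶ B} (hf : IsEffectiveDescentMorphism ((ordCommaForget X).map f))
    (hfx : ∀ x, LiftsComparablePairs (OrdComma.fiberMap f x)) :
    (Monad.comparison (pullbackAdj f hm)).EssSurj where
  mem_essImage alg := by
    have : (Monad.comparison (Over.mapPullbackAdj ((ordCommaForget X).map f))).IsEquivalence := hf
    have := isEquivalence_comparison_of_sameLeft (Over.mapPullbackAdj ((ordCommaForget X).map f))
      (preordPullbackAdj ((ordCommaForget X).map f))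
    exact ⟨_, ⟨gluedIso hm alg ((Monad.comparison _).objObjPreimageIso _) hfx⟩⟩

theorem statement5_general {X : Type u} [Preorder X] (hX : LocallyComplete X)
    {A B : OrdComma X} (f : A ⟶ B)
    (h₁ : IsEffectiveDescentMorphism ((ordCommaForget X).map f))
    (h₂ : ∀ x : X, IsDescentMorphism (OrdComma.fiberMap f x)) :
    @IsEffectiveDescentMorphism (OrdComma X) _ (OrdComma.hasPullbacks hX.meets) _ _ f := by
  have := OrdComma.hasPullbacks hX.meets
  have hf : LiftsComparablePairs f := h₁.isDescentMorphism.liftsComparablePairs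
  have hfx x : LiftsComparablePairs (OrdComma.fiberMap f x) := (h₂ x).liftsComparablePairs
  have := faithful_comparison_pullbackAdj hX.meets hf.surjective
  have := full_comparison_pullbackAdj hX.meets hf hfx
  have := essSurj_comparison_pullbackAdj hX.meets h₁ hfx
  have : (Monad.comparison (pullbackAdj f hX.meets)).IsEquivalence := { }
  exact isEquivalence_comparison_of_sameLeft (pullbackAdj f hX.meets) (Over.mapPullbackAdj f)

/-- **Theorem (Clementino–Janelidze, sufficiency).** For `X` locally complete with a bottom
element and `f : (A, α) ⟶ (B, β)` in `Ord // X`, if the underlying map `f` is an effective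
descent morphism in `Ord` and every restriction `f_x : A_x → B_x` is a descent morphism in
`Ord`, then `f` is an effective descent morphism in `Ord // X`. -/
theorem statement5 {X : Type u} [Preorder X] (hX : LocallyComplete X)
    (hbot : ∃ b : X, ∀ x : X, b ≤ x)
    {A B : OrdComma X} (f : A ⟶ B)
    (h₁ : IsEffectiveDescentMorphism ((ordCommaForget X).map f))
    (h₂ : ∀ x : X, IsDescentMorphism (OrdComma.fiberMap f x)) :
    @IsEffectiveDescentMorphism (OrdComma X) _ (OrdComma.hasPullbacks hX.meets) _ _ f :=
  statement5_general hX f h₁ h₂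

end Desc
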